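/- arXiv:1901.08709 — 3 statements merged into one kernel-verified Lean document; each statement's English description precedes it below -/
import Mathlib

section
/- Let X be a metric space and let D be a dense subset of X such that every Cauchy sequence of points of D converges in X. Then X is a Baire space. -/
/-!
Shadowing a Cauchy sequence `u` by points `d n ∈ D` with `dist (u n) (d n) → 0` produces a Cauchy
sequence in `D`, whose limit is also the limit of `u`. Hence `X` is complete, and complete metric
spaces are Baire.
-/

open Filter Topology

theorem CauchySeq.of_dist_tendsto_zero {α β : Type*} [PseudoMetricSpace α] [Nonempty β]
    [SemilatticeSup β] {u v : β → α} (hu : CauchySeq u)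
    (huv : Tendsto (fun n => dist (u n) (v n)) atTop (𝓝 0)) : CauchySeq v := by
  rw [Metric.cauchySeq_iff] at hu ⊢
  intro ε hε
  obtain ⟨N₁, hN₁⟩ := hu (ε / 3) (by positivity)
  obtain ⟨N₂, hN₂⟩ := Metric.tendsto_atTop.1 huv (ε / 3) (by positivity)
  refine ⟨N₁ ⊔ N₂, fun m hm n hn => ?_⟩
  have hm' : dist (u m) (v m) < ε / 3 := by
    simpa using hN₂ m (le_sup_right.trans hm)
  have hn' : dist (u n) (v n) < ε / 3 := by
    simpa using hN₂ n (le_sup_right.trans hn)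
  calc dist (v m) (v n) ≤ dist (v m) (u m) + dist (u m) (u n) + dist (u n) (v n) :=
        dist_triangle4 _ _ _ _
    _ < ε / 3 + ε / 3 + ε / 3 := by
        rw [dist_comm (v m)]
        gcongr
        exact hN₁ m (le_sup_left.trans hm) n (le_sup_left.trans hn)
    _ = ε := by ring

theorem Dense.completeSpace_of_cauchySeq_tendsto {X : Type*} [PseudoMetricSpace X] {D : Set X}
    (hD : Dense D)
    (hconv : ∀ u : ℕ → X, (∀ n, u n ∈ D) → CauchySeq u → ∃ x, Tendsto u atTop (𝓝 x)) :
    CompleteSpace X := by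
  refine Metric.complete_of_cauchySeq_tendsto fun u hu => ?_
  choose d hdD hd using fun n : ℕ => hD.exists_dist_lt (u n) (Nat.one_div_pos_of_nat (α := ℝ))
  have hud : Tendsto (fun n => dist (u n) (d n)) atTop (𝓝 0) :=
    squeeze_zero (fun _ => dist_nonneg) (fun n => (hd n).le)
      tendsto_one_div_add_atTop_nhds_zero_nat
  obtain ⟨x, hx⟩ := hconv d hdD (hu.of_dist_tendsto_zero hud)
  exact ⟨x, hx.congr_dist (by simpa only [dist_comm] using hud)⟩

theorem stmt_1 {X : Type*} [MetricSpace X] (D : Set X) (hD : Dense D)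
    (hconv : ∀ u : ℕ → X, (∀ n, u n ∈ D) → CauchySeq u →
      ∃ x : X, Tendsto u atTop (𝓝 x)) :
    BaireSpace X :=
  have := hD.completeSpace_of_cauchySeq_tendsto hconv
  inferInstance
end

section
/- Let X be a metric space that is densely complete with respect to a dense set D, and let K ⊆ X be closed. Then the metric subspace K is densely complete, i.e., there exists a dense subset E of K such that every Cauchy sequence of points of E converges in K. -/
/-!
Dense completeness implies completeness: a Cauchy sequence `u` can be shadowed by a sequence `v`
in `D` with `dist (u n) (v n) < 1 / (n + 1)`; then `v` is Cauchy, its limit is also the limit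
of `u`, and so `X` is complete. A closed subset of a complete space is complete, so `E = K`
works.
-/

open Filter Topology

section PseudoMetric

variable {α : Type*} [PseudoMetricSpace α]

theorem CauchySeq.of_tendsto_dist_zero {β : Type*} [Nonempty β] [SemilatticeSup β]
    {u v : β → α} (hu : CauchySeq u)
    (huv : Tendsto (fun n => dist (u n) (v n)) atTop (𝓝 0)) : CauchySeq v := by
  rw [cauchySeq_iff_tendsto_dist_atTop_0, ← prod_atTop_atTop_eq] at hu ⊢
  have hfst := huv.comp (tendsto_fst (g := (atTop : Filter β)))
  have hsnd := huv.comp (tendsto_snd (f := (atTop : Filter β)))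
  have hbound : Tendsto (fun p : β × β =>
      dist (u p.1) (v p.1) + dist (u p.1) (u p.2) + dist (u p.2) (v p.2))
      (atTop ×ˢ atTop) (𝓝 0) := by
    simpa using (hfst.add hu).add hsnd
  refine squeeze_zero (fun _ => dist_nonneg) (fun p => ?_) hbound
  rw [← dist_comm (v p.1)]
  exact dist_triangle4 _ _ _ _

theorem Dense.exists_seq_tendsto_dist_zero {D : Set α} (hD : Dense D) (u : ℕ → α) :
    ∃ v : ℕ → α, (∀ n, v n ∈ D) ∧
      Tendsto (fun n => dist (u n) (v n)) atTop (𝓝 0) := by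
  choose v hvD hv using fun n : ℕ =>
    hD.exists_dist_lt (u n) (Nat.one_div_pos_of_nat (α := ℝ))
  exact ⟨v, hvD, squeeze_zero (fun _ => dist_nonneg) (fun n => (hv n).le)
    tendsto_one_div_add_atTop_nhds_zero_nat⟩

theorem completeSpace_of_dense_of_cauchySeq_tendsto {D : Set α} (hD : Dense D)
    (hconv : ∀ u : ℕ → α, (∀ n, u n ∈ D) → CauchySeq u →
      ∃ x, Tendsto u atTop (𝓝 x)) :
    CompleteSpace α := by
  refine Metric.complete_of_cauchySeq_tendsto fun u hu => ?_
  obtain ⟨v, hvD, huv⟩ := hD.exists_seq_tendsto_dist_zero u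
  obtain ⟨x, hvx⟩ := hconv v hvD (hu.of_tendsto_dist_zero huv)
  exact ⟨x, hvx.congr_dist (by simpa only [dist_comm] using huv)⟩

end PseudoMetric

theorem stmt_14 {X : Type*} [MetricSpace X] (D : Set X) (hD : Dense D)
    (hconv : ∀ u : ℕ → X, (∀ n, u n ∈ D) → CauchySeq u →
      ∃ x, Tendsto u atTop (𝓝 x))
    (K : Set X) (hK : IsClosed K) :
    ∃ E : Set X, E ⊆ K ∧ K ⊆ closure E ∧
      ∀ u : ℕ → X, (∀ n, u n ∈ E) → CauchySeq u →
        ∃ x ∈ K, Tendsto u atTop (𝓝 x) := by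
  have : CompleteSpace X := completeSpace_of_dense_of_cauchySeq_tendsto hD hconv
  exact ⟨K, subset_rfl, subset_closure, fun u hu hcau =>
    cauchySeq_tendsto_of_isComplete hK.isComplete hu hcau⟩
end

section
/- Let C be a countably infinite subset of ℝ such that the metric subspace C of ℝ is not complete. Then the metric subspace ℝ × C of ℝ² (with the Euclidean metric) is not densely complete: there is no dense subset D of ℝ × C such that every Cauchy sequence of points of D converges in ℝ × C. -/
/-! Dense completeness of `ℝ × C` would make `ℝ × C` closed in the plane (a limit of points of
`ℝ × C` is a limit of points of `D`, and that sequence is Cauchy), hence `C` closed in `ℝ`, hence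
complete. -/

open Filter Topology

theorem isClosed_of_cauchySeq_tendsto_of_subset_closure {X : Type*} [UniformSpace X]
    [T2Space X] [FrechetUrysohnSpace X] {S D : Set X} (hSD : S ⊆ closure D)
    (hD : ∀ u : ℕ → X, (∀ n, u n ∈ D) → CauchySeq u → ∃ p ∈ S, Tendsto u atTop (𝓝 p)) :
    IsClosed S := by
  refine isClosed_iff_clusterPt.mpr fun x hx => ?_
  have hxD : x ∈ closure D :=
    closure_minimal hSD isClosed_closure (mem_closure_iff_clusterPt.mpr hx)
  obtain ⟨d, hdD, hdx⟩ := mem_closure_iff_seq_limit.mp hxD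
  obtain ⟨p, hpS, hdp⟩ := hD d hdD hdx.cauchySeq
  rwa [tendsto_nhds_unique hdx hdp]

theorem stmt_15_general (C : Set ℝ)
    (hCnc : ∃ u : ℕ → ℝ, (∀ n, u n ∈ C) ∧ CauchySeq u ∧
      ¬ ∃ x ∈ C, Tendsto u atTop (𝓝 x)) :
    ¬ ∃ D : Set (ℝ × ℝ), D ⊆ Set.univ ×ˢ C ∧ (Set.univ ×ˢ C : Set (ℝ × ℝ)) ⊆ closure D ∧
      ∀ u : ℕ → ℝ × ℝ, (∀ n, u n ∈ D) → CauchySeq u →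
        ∃ p ∈ (Set.univ ×ˢ C : Set (ℝ × ℝ)), Tendsto u atTop (𝓝 p) := by
  rintro ⟨D, -, hdense, hcomplete⟩
  obtain ⟨u, huC, hu, hnolim⟩ := hCnc
  have hclosed : IsClosed (Set.univ ×ˢ C : Set (ℝ × ℝ)) :=
    isClosed_of_cauchySeq_tendsto_of_subset_closure hdense hcomplete
  have hC : IsClosed C := by
    simpa using hclosed.preimage ((continuous_const (y := (0 : ℝ))).prodMk continuous_id)
  obtain ⟨x, hx⟩ := cauchySeq_tendsto_of_complete hu
  exact hnolim ⟨x, hC.mem_of_tendsto hx (Eventually.of_forall huC), hx⟩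

theorem stmt_15 (C : Set ℝ) (hCc : C.Countable) (hCi : C.Infinite)
    (hCnc : ∃ u : ℕ → ℝ, (∀ n, u n ∈ C) ∧ CauchySeq u ∧
      ¬ ∃ x ∈ C, Tendsto u atTop (𝓝 x)) :
    ¬ ∃ D : Set (ℝ × ℝ), D ⊆ Set.univ ×ˢ C ∧ (Set.univ ×ˢ C : Set (ℝ × ℝ)) ⊆ closure D ∧
      ∀ u : ℕ → ℝ × ℝ, (∀ n, u n ∈ D) → CauchySeq u →
        ∃ p ∈ (Set.univ ×ˢ C : Set (ℝ × ℝ)), Tendsto u atTop (𝓝 p) :=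
  stmt_15_general C hCnc
end
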